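/- Label-extension pruning is exact: Let I be a finite index set, let S_i ⊆ ℝ^K be a finite set and c_i ∈ ℝ^K for each i ∈ I. Then ND(⋃_{i ∈ I} (S_i + {c_i})) = ND(⋃_{i ∈ I} (ND(S_i) + {c_i})), where S + {c} denotes {y + c : y ∈ S}. That is, discarding dominated partial labels before extending them along arcs does not change the resulting nondominated set. -/

import Mathlib

open Pointwise

/-- `y` dominates `y'`: componentwise at least as large and not equal. -/
def dominates {K : ℕ} (y y' : Fin K → ℝ) : Prop :=
  (∀ k, y' k ≤ y k) ∧ y ≠ y'

/-- The nondominated subset of `S`. -/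
def ND {K : ℕ} (S : Set (Fin K → ℝ)) : Set (Fin K → ℝ) :=
  {y ∈ S | ¬ ∃ y' ∈ S, dominates y' y}

/-! Dominance is the strict part of the componentwise order on `Fin K → ℝ`, so `ND S` is the set
of maximal elements of `S`. Every label of a finite `S i` lies below a maximal one, and translating
by `c i` preserves the order; hence the pruned union is a cofinal subset of the full union, and a
set and a cofinal subset have the same maximal elements. -/

lemma dominates_iff_lt {K : ℕ} {y y' : Fin K → ℝ} : dominates y y' ↔ y' < y := by
  rw [dominates, lt_iff_le_and_ne, Pi.le_def, ne_comm]

lemma ND_eq_setOf_maximal {K : ℕ} (S : Set (Fin K → ℝ)) : ND S = {y | Maximal (· ∈ S) y} := by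
  ext y
  simp only [ND, dominates_iff_lt, maximal_iff_forall_gt, Set.mem_ofPred_eq, not_exists, not_and]
  exact and_congr_right fun _ => forall_congr' fun _ => imp_not_comm

theorem ND_extension_pruning_general {K : ℕ} {ι : Type*}
    (S : ι → Set (Fin K → ℝ)) (c : ι → Fin K → ℝ) (hS : ∀ i, (S i).Finite) :
    ND (⋃ i, (fun y => y + c i) '' S i) = ND (⋃ i, (fun y => y + c i) '' ND (S i)) := by
  simp only [ND_eq_setOf_maximal]
  have pruned_subset : (⋃ i, (fun y => y + c i) '' {y | Maximal (· ∈ S i) y}) ⊆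
      ⋃ i, (fun y => y + c i) '' S i :=
    Set.iUnion_mono fun i => Set.image_mono fun _ hy => hy.prop
  have pruned_cofinal : ∀ x ∈ ⋃ i, (fun y => y + c i) '' S i,
      ∃ x', x ≤ x' ∧ x' ∈ ⋃ i, (fun y => y + c i) '' {y | Maximal (· ∈ S i) y} := by
    rintro _ ⟨_, ⟨i, rfl⟩, s, hs, rfl⟩
    obtain ⟨z, hsz, hz⟩ := (hS i).exists_le_maximal hs
    exact ⟨z + c i, add_le_add_left hsz _, Set.mem_iUnion_of_mem i ⟨z, hz, rfl⟩⟩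
  ext y
  exact maximal_iff_maximal_of_imp_of_forall (fun _ hx => pruned_subset hx) pruned_cofinal

/-- **Label-extension pruning is exact.**  For a finite index set `ι`, finite sets
`S i ⊆ ℝ^K` and vectors `c i ∈ ℝ^K`,
`ND(⋃ i, (S i + {c i})) = ND(⋃ i, (ND(S i) + {c i}))`. -/
theorem ND_extension_pruning {K : ℕ} {ι : Type*} [Finite ι]
    (S : ι → Set (Fin K → ℝ)) (c : ι → Fin K → ℝ) (hS : ∀ i, (S i).Finite) :
    ND (⋃ i, (fun y => y + c i) '' S i) = ND (⋃ i, (fun y => y + c i) '' ND (S i)) :=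
  ND_extension_pruning_general S c hS
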